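/- arXiv:2311.03992 — 5 statements merged into one kernel-verified Lean document; each statement's English description precedes it below -/
import Mathlib

section
/- Let i ∉ S⋆ and j ∈ S⋆ such that i attains the minimum of M(j,k) over k ≠ j, and assume additionally that min_{k∈S⋆\{j}} M(j,k) > min_{k≠j} M(j,k). Then j is the unique arm strictly dominating i, i.e., {k : μ_i ≺ μ_k} = {j}. -/
open scoped Classical

noncomputable section

def Mgap {D : ℕ} [NeZero D] (x y : Fin D → ℝ) : ℝ :=
  Finset.univ.sup' Finset.univ_nonempty (fun d => x d - y d)

def paretoSet {K D : ℕ} (μ : Fin K → Fin D → ℝ) : Finset (Fin K) :=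
  Finset.univ.filter (fun i => ¬ ∃ j, ∀ d, μ i d < μ j d)

/-- If `i ∉ S⋆`, `j ∈ S⋆`, `i` attains the minimum of `M(j,k)` over `k ≠ j`, and the
minimum of `M(j,k)` over `k ∈ S⋆ \ {j}` is strictly larger than the minimum over all
`k ≠ j`, then `j` is the unique arm strictly dominating `i`. -/
theorem unique_dominating_of_argmin {K D : ℕ} [NeZero D]
    (μ : Fin K → Fin D → ℝ) (i j : Fin K) (hij : i ≠ j)
    (hi : i ∉ paretoSet μ) (hj : j ∈ paretoSet μ)
    (hargmin : ∀ k, k ≠ j → Mgap (μ j) (μ i) ≤ Mgap (μ j) (μ k))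
    (hstrict : ∀ k ∈ paretoSet μ, k ≠ j → Mgap (μ j) (μ i) < Mgap (μ j) (μ k)) :
    {k : Fin K | ∀ d, μ i d < μ k d} = {j} := by
  -- any dominator of i must equal j
  have key : ∀ k : Fin K, (∀ d, μ i d < μ k d) → k = j := by
    intro k hk
    by_contra hkj
    have h1 : Mgap (μ j) (μ k) < Mgap (μ j) (μ i) := by
      rw [Mgap, Finset.sup'_lt_iff]
      intro d _
      have : μ j d - μ k d < μ j d - μ i d := by linarith [hk d]
      exact lt_of_lt_of_le this (Finset.le_sup' (fun d => μ j d - μ i d) (Finset.mem_univ d))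
    exact absurd (hargmin k hkj) (not_le.mpr h1)
  have hdom : ∃ k, ∀ d, μ i d < μ k d := by
    by_contra h
    exact hi (Finset.mem_filter.mpr ⟨Finset.mem_univ i, h⟩)
  obtain ⟨k, hk⟩ := hdom
  have hkj := key k hk
  subst hkj
  ext m
  simp only [Set.mem_setOf_eq, Set.mem_singleton_iff]
  exact ⟨key m, fun h => h ▸ hk⟩
end
end

section
/- For a Pareto optimal arm i, define δ_i^+ := min_{j∈S⋆\{i}} min(M(i,j), M(j,i)) and δ_i^− := min_{j∉S⋆} [ (M(j,i))^+ + Δ_j^⋆ ], with Δ_j^⋆ := max_{k∈S⋆} m(j,k), and Δ_i := min(δ_i^+, δ_i^−). Also define δ_i^⋆ := min_{j≠i} [ M(i,j) ∧ ( (M(j,i))^+ + (Δ_j^⋆)^+ ) ] where Δ_j^⋆ := max_{k≠j} m(j,k). Then Δ_i = δ_i^⋆. -/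
open scoped Classical

noncomputable section

def mgap {D : ℕ} [NeZero D] (x y : Fin D → ℝ) : ℝ :=
  Finset.univ.inf' Finset.univ_nonempty (fun d => y d - x d)

/-- The Pareto set as a set of indices. -/
def pareto {K D : ℕ} (μ : Fin K → Fin D → ℝ) : Set (Fin K) :=
  {i | ¬ ∃ j, ∀ d, μ i d < μ j d}

section Aux

variable {K D : ℕ} [NeZero D]

lemma le_Mgap (x y : Fin D → ℝ) (d : Fin D) : x d - y d ≤ Mgap x y := by
  unfold Mgap
  exact Finset.le_sup' (fun d => x d - y d) (Finset.mem_univ d)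

lemma mgap_le (x y : Fin D → ℝ) (d : Fin D) : mgap x y ≤ y d - x d := by
  unfold mgap
  exact Finset.inf'_le (fun d => y d - x d) (Finset.mem_univ d)

lemma Mgap_neg_iff (x y : Fin D → ℝ) : Mgap x y < 0 ↔ ∀ d, x d < y d := by
  unfold Mgap
  rw [Finset.sup'_lt_iff]
  simp [sub_neg]

lemma mgap_pos_iff (x y : Fin D → ℝ) : 0 < mgap x y ↔ ∀ d, x d < y d := by
  unfold mgap
  rw [Finset.lt_inf'_iff]
  simp [sub_pos]

lemma mgap_le_Mgap (x y : Fin D → ℝ) : mgap y x ≤ Mgap x y := by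
  obtain ⟨d, -⟩ := (Finset.univ_nonempty : (Finset.univ : Finset (Fin D)).Nonempty)
  exact le_trans (mgap_le y x d) (le_Mgap x y d)

lemma Mgap_mono (x y y' : Fin D → ℝ) (h : ∀ d, y d ≤ y' d) : Mgap x y' ≤ Mgap x y := by
  apply Finset.sup'_le
  intro d _
  exact le_trans (by linarith [h d]) (le_Mgap x y d)

lemma mgap_mono (x y y' : Fin D → ℝ) (h : ∀ d, y d ≤ y' d) : mgap x y ≤ mgap x y' := by
  apply Finset.le_inf'
  intro d _
  exact le_trans (mgap_le x y d) (by linarith [h d])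

lemma pareto_iff (μ : Fin K → Fin D → ℝ) (i : Fin K) :
    i ∈ pareto μ ↔ ∀ j, 0 ≤ Mgap (μ i) (μ j) := by
  unfold pareto
  simp only [Set.mem_setOf_eq, not_exists]
  constructor
  · intro h j
    by_contra hc
    exact h j ((Mgap_neg_iff _ _).1 (by linarith))
  · intro h j hj
    exact absurd ((Mgap_neg_iff (μ i) (μ j)).2 hj) (not_lt.2 (h j))

lemma exists_pareto_dom (μ : Fin K → Fin D → ℝ) {j : Fin K} (hj : j ∉ pareto μ) :
    ∃ k ∈ pareto μ, ∀ d, μ j d < μ k d := by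
  have hne : (Finset.univ.filter (fun k => ∀ d, μ j d < μ k d)).Nonempty := by
    simp only [pareto, Set.mem_setOf_eq, not_not] at hj
    obtain ⟨k, hk⟩ := hj
    exact ⟨k, by simp [hk]⟩
  obtain ⟨k, hk, hmax⟩ := Finset.exists_max_image _ (fun k => ∑ d, μ k d) hne
  simp only [Finset.mem_filter, Finset.mem_univ, true_and] at hk
  refine ⟨k, ?_, hk⟩
  rintro ⟨k', hk'⟩
  have hk'mem : k' ∈ Finset.univ.filter (fun k => ∀ d, μ j d < μ k d) := by
    simp only [Finset.mem_filter, Finset.mem_univ, true_and]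
    exact fun d => lt_trans (hk d) (hk' d)
  have hsum : ∑ d, μ k d < ∑ d, μ k' d := by
    apply Finset.sum_lt_sum_of_nonempty Finset.univ_nonempty
    intro d _
    exact hk' d
  exact absurd (hmax k' hk'mem) (not_le.2 hsum)

end Aux

/-- For a Pareto optimal arm `i`,
`Δ_i := min(δ_i⁺, δ_i⁻) = δ_i⋆`, where the minima over possibly empty index sets are
taken in `EReal` (convention `inf ∅ = +∞`). -/
theorem gap_redef_optimal {K D : ℕ} [NeZero D]
    (μ : Fin K → Fin D → ℝ) (i : Fin K) (hi : i ∈ pareto μ) :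
    min
      -- δ_i⁺ := min_{j ∈ S⋆ \ {i}} min (M(i,j)) (M(j,i))
      (⨅ j ∈ pareto μ \ {i}, (min (Mgap (μ i) (μ j)) (Mgap (μ j) (μ i)) : EReal))
      -- δ_i⁻ := min_{j ∉ S⋆} ( (M(j,i))⁺ + Δ_j⋆ ),  Δ_j⋆ := max_{k ∈ S⋆} m(j,k)
      (⨅ j ∈ (pareto μ)ᶜ,
        (((max (Mgap (μ j) (μ i)) 0 : ℝ) : EReal)
          + ⨆ k ∈ pareto μ, (mgap (μ j) (μ k) : EReal)))
    =
    -- δ_i⋆ := min_{j ≠ i} ( M(i,j) ⊓ ((M(j,i))⁺ + (Δ_j⋆)⁺) ),  Δ_j⋆ := max_{k ≠ j} m(j,k)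
    ⨅ j ∈ ({i}ᶜ : Set (Fin K)),
      min ((Mgap (μ i) (μ j) : ℝ) : EReal)
        (((max (Mgap (μ j) (μ i)) 0 : ℝ) : EReal)
          + max (⨆ k ∈ ({j}ᶜ : Set (Fin K)), (mgap (μ j) (μ k) : EReal)) 0) := by
  classical
  have hiP : ∀ j, 0 ≤ Mgap (μ i) (μ j) := (pareto_iff μ i).1 hi
  -- For any j in the Pareto set, mgap (μ j) (μ k) ≤ 0 for all k
  have hmgap_nonpos : ∀ j ∈ pareto μ, ∀ k, mgap (μ j) (μ k) ≤ 0 := by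
    intro j hj k
    by_contra hc
    push_neg at hc
    have hd := (mgap_pos_iff (μ j) (μ k)).1 hc
    exact absurd ((Mgap_neg_iff (μ j) (μ k)).2 hd) (not_lt.2 ((pareto_iff μ j).1 hj k))
  -- Key rewriting of the RHS term for Pareto j ≠ i: it equals min (M(i,j)) (M(j,i))
  have hterm_pareto : ∀ j ∈ pareto μ,
      min ((Mgap (μ i) (μ j) : ℝ) : EReal)
        (((max (Mgap (μ j) (μ i)) 0 : ℝ) : EReal)
          + max (⨆ k ∈ ({j}ᶜ : Set (Fin K)), (mgap (μ j) (μ k) : EReal)) 0)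
      = (min (Mgap (μ i) (μ j)) (Mgap (μ j) (μ i)) : EReal) := by
    intro j hj
    have h1 : max (Mgap (μ j) (μ i)) 0 = Mgap (μ j) (μ i) :=
      max_eq_left ((pareto_iff μ j).1 hj i)
    have h2 : max (⨆ k ∈ ({j}ᶜ : Set (Fin K)), (mgap (μ j) (μ k) : EReal)) 0 = 0 := by
      apply max_eq_right
      apply iSup₂_le
      intro k _
      exact_mod_cast hmgap_nonpos j hj k
    rw [h1, h2, add_zero]
  -- For j ∉ pareto μ: the sup over {j}ᶜ (clipped at 0) equals the sup over the Pareto set,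
  -- which is attained at some k0 ∈ pareto μ with positive mgap.
  have hsup : ∀ j ∉ pareto μ, ∃ k0 ∈ pareto μ, 0 < mgap (μ j) (μ k0) ∧
      (⨆ k ∈ pareto μ, (mgap (μ j) (μ k) : EReal)) = ((mgap (μ j) (μ k0) : ℝ) : EReal) ∧
      max (⨆ k ∈ ({j}ᶜ : Set (Fin K)), (mgap (μ j) (μ k) : EReal)) 0
        = ⨆ k ∈ pareto μ, (mgap (μ j) (μ k) : EReal) := by
    intro j hj
    obtain ⟨kd, hkdP, hkd⟩ := exists_pareto_dom μ hj
    have hPne : (Finset.univ.filter (fun k => k ∈ pareto μ)).Nonempty :=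
      ⟨kd, by simp [hkdP]⟩
    obtain ⟨k0, hk0, hmax⟩ :=
      Finset.exists_max_image _ (fun k => mgap (μ j) (μ k)) hPne
    simp only [Finset.mem_filter, Finset.mem_univ, true_and] at hk0
    have hmax' : ∀ k ∈ pareto μ, mgap (μ j) (μ k) ≤ mgap (μ j) (μ k0) := by
      intro k hk
      exact hmax k (by simp [hk])
    have hpos : 0 < mgap (μ j) (μ k0) :=
      lt_of_lt_of_le ((mgap_pos_iff (μ j) (μ kd)).2 hkd) (hmax' kd hkdP)
    have hsupP : (⨆ k ∈ pareto μ, (mgap (μ j) (μ k) : EReal))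
        = ((mgap (μ j) (μ k0) : ℝ) : EReal) := by
      apply le_antisymm
      · apply iSup₂_le
        intro k hk
        exact_mod_cast hmax' k hk
      · exact le_iSup₂ (f := fun k (_ : k ∈ pareto μ) => ((mgap (μ j) (μ k) : ℝ) : EReal)) k0 hk0
    refine ⟨k0, hk0, hpos, hsupP, ?_⟩
    have hle1 : (⨆ k ∈ ({j}ᶜ : Set (Fin K)), (mgap (μ j) (μ k) : EReal))
        ≤ ⨆ k ∈ pareto μ, (mgap (μ j) (μ k) : EReal) := by
      apply iSup₂_le
      intro k _
      by_cases hk : k ∈ pareto μ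
      · exact le_iSup₂ (f := fun k (_ : k ∈ pareto μ) => ((mgap (μ j) (μ k) : ℝ) : EReal)) k hk
      · obtain ⟨k', hk'P, hk'⟩ := exists_pareto_dom μ hk
        have : mgap (μ j) (μ k) ≤ mgap (μ j) (μ k') :=
          mgap_mono (μ j) (μ k) (μ k') (fun d => le_of_lt (hk' d))
        calc ((mgap (μ j) (μ k) : ℝ) : EReal) ≤ ((mgap (μ j) (μ k') : ℝ) : EReal) := by
              exact_mod_cast this
          _ ≤ _ := le_iSup₂ (f := fun k (_ : k ∈ pareto μ) => ((mgap (μ j) (μ k) : ℝ) : EReal)) k' hk'P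
    have hle2 : (⨆ k ∈ pareto μ, (mgap (μ j) (μ k) : EReal))
        ≤ ⨆ k ∈ ({j}ᶜ : Set (Fin K)), (mgap (μ j) (μ k) : EReal) := by
      apply iSup₂_le
      intro k hk
      have hkj : k ∈ ({j}ᶜ : Set (Fin K)) := by
        simp only [Set.mem_compl_iff, Set.mem_singleton_iff]
        rintro rfl
        exact hj hk
      exact le_iSup₂ (f := fun k (_ : k ∈ ({j}ᶜ : Set (Fin K))) => ((mgap (μ j) (μ k) : ℝ) : EReal)) k hkj
    have heq := le_antisymm hle1 hle2
    rw [heq]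
    apply max_eq_left
    rw [hsupP]
    exact_mod_cast le_of_lt hpos
  apply le_antisymm
  · -- LHS ≤ RHS
    apply le_iInf₂
    intro j hj
    have hji : j ≠ i := by simpa [Set.mem_compl_iff] using hj
    by_cases hjP : j ∈ pareto μ
    · rw [hterm_pareto j hjP]
      refine le_trans (min_le_left _ _) ?_
      exact iInf₂_le (f := fun j (_ : j ∈ pareto μ \ {i}) =>
        (min (Mgap (μ i) (μ j)) (Mgap (μ j) (μ i)) : EReal)) j ⟨hjP, hji⟩
    · obtain ⟨k0, hk0P, hpos, hsupP, hmaxeq⟩ := hsup j hjP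
      rw [le_min_iff]
      constructor
      · -- LHS ≤ M(i,j)
        by_cases hk0i : k0 = i
        · -- i strictly dominates j; use the δ⁻ term at j
          rw [hk0i] at hpos hsupP
          refine le_trans (min_le_right _ _) ?_
          refine le_trans (iInf₂_le (f := fun j (_ : j ∈ (pareto μ)ᶜ) =>
            (((max (Mgap (μ j) (μ i)) 0 : ℝ) : EReal)
              + ⨆ k ∈ pareto μ, (mgap (μ j) (μ k) : EReal))) j hjP) ?_
          have hdom : ∀ d, μ j d < μ i d := (mgap_pos_iff (μ j) (μ i)).1 hpos
          have hMneg : Mgap (μ j) (μ i) < 0 := (Mgap_neg_iff (μ j) (μ i)).2 hdom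
          have h0 : max (Mgap (μ j) (μ i)) 0 = 0 := max_eq_right (le_of_lt hMneg)
          rw [h0, hsupP]
          have : (0:ℝ) + mgap (μ j) (μ i) ≤ Mgap (μ i) (μ j) := by
            rw [zero_add]; exact mgap_le_Mgap (μ i) (μ j)
          calc ((0:ℝ):EReal) + ((mgap (μ j) (μ i) : ℝ):EReal)
              = (((0:ℝ) + mgap (μ j) (μ i) : ℝ) : EReal) := by rw [EReal.coe_add]
            _ ≤ _ := by exact_mod_cast this
        · -- k0 ∈ pareto μ, k0 ≠ i, k0 strictly dominates j; use the δ⁺ term at k0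
          refine le_trans (min_le_left _ _) ?_
          refine le_trans (iInf₂_le (f := fun j (_ : j ∈ pareto μ \ {i}) =>
            (min (Mgap (μ i) (μ j)) (Mgap (μ j) (μ i)) : EReal)) k0 ⟨hk0P, hk0i⟩) ?_
          have hdom : ∀ d, μ j d < μ k0 d := (mgap_pos_iff (μ j) (μ k0)).1 hpos
          refine le_trans (min_le_left _ _) ?_
          exact_mod_cast Mgap_mono (μ i) (μ j) (μ k0) (fun d => le_of_lt (hdom d))
      · -- LHS ≤ (M(j,i))⁺ + (Δ_j⋆)⁺ : use the δ⁻ term at j, after rewriting the sup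
        rw [hmaxeq]
        refine le_trans (min_le_right _ _) ?_
        exact iInf₂_le (f := fun j (_ : j ∈ (pareto μ)ᶜ) =>
          (((max (Mgap (μ j) (μ i)) 0 : ℝ) : EReal)
            + ⨆ k ∈ pareto μ, (mgap (μ j) (μ k) : EReal))) j hjP
  · -- RHS ≤ LHS
    rw [le_min_iff]
    constructor
    · apply le_iInf₂
      intro j hjmem
      obtain ⟨hjP, hji⟩ := hjmem
      have hji' : j ∈ ({i}ᶜ : Set (Fin K)) := hji
      refine le_trans (iInf₂_le (f := fun j (_ : j ∈ ({i}ᶜ : Set (Fin K))) =>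
        min ((Mgap (μ i) (μ j) : ℝ) : EReal)
          (((max (Mgap (μ j) (μ i)) 0 : ℝ) : EReal)
            + max (⨆ k ∈ ({j}ᶜ : Set (Fin K)), (mgap (μ j) (μ k) : EReal)) 0)) j hji') ?_
      rw [hterm_pareto j hjP]
    · apply le_iInf₂
      intro j hjP
      simp only [Set.mem_compl_iff] at hjP
      obtain ⟨k0, hk0P, hpos, hsupP, hmaxeq⟩ := hsup j hjP
      have hji : j ∈ ({i}ᶜ : Set (Fin K)) := by
        simp only [Set.mem_compl_iff, Set.mem_singleton_iff]
        rintro rfl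
        exact hjP hi
      refine le_trans (iInf₂_le (f := fun j (_ : j ∈ ({i}ᶜ : Set (Fin K))) =>
        min ((Mgap (μ i) (μ j) : ℝ) : EReal)
          (((max (Mgap (μ j) (μ i)) 0 : ℝ) : EReal)
            + max (⨆ k ∈ ({j}ᶜ : Set (Fin K)), (mgap (μ j) (μ k) : EReal)) 0)) j hji) ?_
      rw [hmaxeq]
      exact min_le_right _ _
end
end

section
/- With the Successive Rejects allocation n_r := ⌈(1/loḡ(K)) · (T−K)/(K+1−r)⌉ where loḡ(K) := 1/2 + Σ_{i=2}^K 1/i, and sorted gaps Δ_(1) ≤ … ≤ Δ_(K), we have min_{r∈[K−1]} n_r · Δ_(K+1−r)^2 ≥ (T−K)/(loḡ(K) · H_2(ν)), where H_2(ν) := max_{2≤r≤K} r·Δ_(r)^{-2}. -/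
noncomputable section

/-- `loḡ(K) := 1/2 + Σ_{i=2}^K 1/i`. -/
def logBar (K : ℕ) : ℝ := 1 / 2 + ∑ i ∈ Finset.Icc 2 K, (1 : ℝ) / i

/-- Successive Rejects allocation: `n_r := ⌈(1/loḡ K) · (T - K)/(K + 1 - r)⌉`. -/
def nSR (T K r : ℕ) : ℝ := ⌈(1 / logBar K) * ((T : ℝ) - K) / ((K + 1 - r : ℕ) : ℝ)⌉

lemma logBar_pos (K : ℕ) : 0 < logBar K := by
  have h : (0 : ℝ) ≤ ∑ i ∈ Finset.Icc 2 K, (1 : ℝ) / i :=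
    Finset.sum_nonneg fun i _ => by positivity
  unfold logBar; linarith

/-- With sorted gaps `Δ_(1) ≤ … ≤ Δ_(K)` (indexed on `{1,…,K}`),
`min_{r ∈ [K-1]} n_r · Δ_(K+1-r)² ≥ (T - K)/(loḡ K · H₂)`,
where `H₂ = max_{2 ≤ r ≤ K} r · Δ_(r)⁻²`. -/
theorem SR_allocation_bound (T K : ℕ) (hK : 2 ≤ K) (hT : K ≤ T)
    (Δ : ℕ → ℝ) (hpos : ∀ i ∈ Finset.Icc 1 K, 0 < Δ i)
    (hmono : ∀ i ∈ Finset.Icc 1 K, ∀ j ∈ Finset.Icc 1 K, i ≤ j → Δ i ≤ Δ j) :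
    ∀ r ∈ Finset.Icc 1 (K - 1),
      nSR T K r * (Δ (K + 1 - r)) ^ 2 ≥
        ((T : ℝ) - K) /
          (logBar K *
            (Finset.Icc 2 K).sup' (Finset.nonempty_Icc.mpr hK)
              (fun i => (i : ℝ) * (Δ i) ^ (-2 : ℤ))) := by
  intro r hr
  rw [Finset.mem_Icc] at hr
  obtain ⟨hr1, hr2⟩ := hr
  set m : ℕ := K + 1 - r with hm
  have hm2 : 2 ≤ m := by omega
  have hmK : m ≤ K := by omega
  have hmI : m ∈ Finset.Icc 2 K := Finset.mem_Icc.mpr ⟨hm2, hmK⟩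
  have hΔ : 0 < Δ m := hpos m (Finset.mem_Icc.mpr ⟨by omega, hmK⟩)
  set H := (Finset.Icc 2 K).sup' (Finset.nonempty_Icc.mpr hK)
      (fun i => (i : ℝ) * (Δ i) ^ (-2 : ℤ)) with hH
  have hmH : (m : ℝ) * (Δ m) ^ (-2 : ℤ) ≤ H := Finset.le_sup' (fun (i : ℕ) => (i : ℝ) * (Δ i) ^ (-2 : ℤ)) hmI
  have hterm : (0 : ℝ) < (m : ℝ) * (Δ m) ^ (-2 : ℤ) := by
    apply mul_pos (by exact_mod_cast Nat.lt_of_lt_of_le (by norm_num) hm2)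
    positivity
  have hHpos : 0 < H := lt_of_lt_of_le hterm hmH
  have hlog := logBar_pos K
  have hTK : (0 : ℝ) ≤ (T : ℝ) - K := by
    have : (K : ℝ) ≤ T := by exact_mod_cast hT
    linarith
  -- ceiling bound
  have hceil : (1 / logBar K) * ((T : ℝ) - K) / (m : ℝ) ≤ nSR T K r := by
    unfold nSR
    exact Int.le_ceil _
  have hmpos : (0 : ℝ) < (m : ℝ) := by exact_mod_cast Nat.lt_of_lt_of_le (by norm_num) hm2
  have key : ((T : ℝ) - K) / (logBar K * H) ≤
      (1 / logBar K) * ((T : ℝ) - K) / (m : ℝ) * (Δ m) ^ 2 := by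
    have heq : (1 / logBar K) * ((T : ℝ) - K) / (m : ℝ) * (Δ m) ^ 2 =
        ((T : ℝ) - K) / (logBar K * ((m : ℝ) * (Δ m) ^ (-2 : ℤ))) := by
      rw [zpow_neg, zpow_two]
      field_simp
    rw [heq]
    apply div_le_div_of_nonneg_left hTK (by positivity)
    exact mul_le_mul_of_nonneg_left hmH (le_of_lt hlog)
  calc ((T : ℝ) - K) / (logBar K * H)
      ≤ (1 / logBar K) * ((T : ℝ) - K) / (m : ℝ) * (Δ m) ^ 2 := key
    _ ≤ nSR T K r * (Δ m) ^ 2 := by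
        apply mul_le_mul_of_nonneg_right hceil (by positivity)
end
end

section
/- For the Sequential Halving allocation with n_r ≥ T/(λ_r · ⌈log₂ K⌉) and λ_r ≤ 2(λ_{r+1}+1), and sorted positive gaps Δ_(1) ≤ … ≤ Δ_(K), it holds that min_{r∈[R]} n_r · Δ_(λ_{r+1}+1)^2 ≥ T/(2 H_2(ν) ⌈log₂ K⌉), where H_2(ν) := max_{i∈[K]} i·Δ_(i)^{-2}. -/
/-- Sequential Halving schedule: `lamSH K (r-1) = λ_r`, with `λ_1 = K` and
`λ_{r+1} = ⌈λ_r / 2⌉`. -/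
def lamSH (K : ℕ) : ℕ → ℕ
  | 0 => K
  | r + 1 => (lamSH K r + 1) / 2

lemma lamSH_pos (K : ℕ) (hK : 1 ≤ K) : ∀ r, 1 ≤ lamSH K r := by
  intro r; induction r with
  | zero => exact hK
  | succ m ih => simp only [lamSH]; omega

lemma lamSH_le (K : ℕ) (hK : 2 ≤ K) : ∀ r, 1 ≤ r → lamSH K r + 1 ≤ K := by
  intro r hr
  induction r with
  | zero => omega
  | succ m ih =>
    rcases Nat.eq_zero_or_pos m with h0 | h1
    · subst h0; simp only [lamSH]; omega
    · have := ih h1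
      simp only [lamSH]; omega

lemma lamSH_half (K m : ℕ) : lamSH K m ≤ 2 * (lamSH K (m+1) + 1) := by
  simp only [lamSH]; omega


/-- For the Sequential Halving allocation with `n_r ≥ T/(λ_r ⌈log₂ K⌉)` and sorted
positive gaps, `min_{r ∈ [R]} n_r · Δ_(λ_{r+1}+1)² ≥ T/(2 H₂ ⌈log₂ K⌉)` where
`H₂ = max_{i ∈ [K]} i · Δ_(i)⁻²`. -/
theorem SH_allocation_bound (T K : ℕ) (hK : 2 ≤ K) (hT : K ≤ T)
    (n : ℕ → ℝ)
    (hn : ∀ r, 1 ≤ r → r ≤ Nat.clog 2 K →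
      n r ≥ (T : ℝ) / (lamSH K (r - 1) * (Nat.clog 2 K : ℝ)))
    (Δ : ℕ → ℝ) (hpos : ∀ i ∈ Finset.Icc 1 K, 0 < Δ i)
    (hmono : ∀ i ∈ Finset.Icc 1 K, ∀ j ∈ Finset.Icc 1 K, i ≤ j → Δ i ≤ Δ j) :
    ∀ r, 1 ≤ r → r ≤ Nat.clog 2 K →
      n r * (Δ (lamSH K r + 1)) ^ 2 ≥
        (T : ℝ) /
          (2 * ((Finset.Icc 1 K).sup'
              (Finset.nonempty_Icc.mpr (by omega))
              (fun i => (i : ℝ) * (Δ i) ^ (-2 : ℤ))) * (Nat.clog 2 K : ℝ)) := by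
  intro r hr1 hr2
  set R : ℝ := (Nat.clog 2 K : ℝ) with hR
  set H : ℝ := (Finset.Icc 1 K).sup' (Finset.nonempty_Icc.mpr (by omega))
      (fun i => (i : ℝ) * (Δ i) ^ (-2 : ℤ)) with hH
  set a : ℕ := lamSH K r + 1 with ha
  set lam : ℕ := lamSH K (r - 1) with hlam
  have hamem : a ∈ Finset.Icc 1 K := by
    simp only [Finset.mem_Icc]
    exact ⟨by omega, lamSH_le K hK r hr1⟩
  have hΔa : 0 < Δ a := hpos a hamem
  have hHa : (a : ℝ) * (Δ a) ^ (-2 : ℤ) ≤ H :=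
    Finset.le_sup' (fun (i : ℕ) => (i : ℝ) * (Δ i) ^ (-2 : ℤ)) hamem
  have hzpow : (Δ a) ^ (-2 : ℤ) = ((Δ a) ^ 2)⁻¹ := by
    rw [zpow_neg]; norm_cast
  have haH : (a : ℝ) ≤ H * (Δ a) ^ 2 := by
    rw [hzpow] at hHa
    have := mul_le_mul_of_nonneg_right hHa (sq_nonneg (Δ a))
    rwa [mul_assoc, inv_mul_cancel₀ (by positivity), mul_one] at this
  have hHpos : 0 < H := by
    refine lt_of_lt_of_le ?_ hHa
    rw [hzpow]; positivity
  have hRpos : (0:ℝ) < R := by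
    rw [hR]
    exact_mod_cast Nat.clog_pos (by norm_num) hK
  have hlampos : (0:ℝ) < (lam : ℝ) := by
    exact_mod_cast lamSH_pos K (by omega) (r-1)
  have hTpos : (0:ℝ) < (T : ℝ) := by exact_mod_cast (by omega : 0 < T)
  have hlam2a : (lam : ℝ) ≤ 2 * a := by
    have : lam ≤ 2 * (lamSH K (r-1+1) + 1) := lamSH_half K (r-1)
    have h' : r - 1 + 1 = r := by omega
    rw [h'] at this
    exact_mod_cast this
  have key : (T : ℝ) / (2 * H * R) ≤ (T : ℝ) / (lam * R) * (Δ a) ^ 2 := by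
    rw [div_mul_eq_mul_div, div_le_div_iff₀ (by positivity) (by positivity)]
    nlinarith [mul_pos hTpos hRpos, sq_nonneg (Δ a), mul_le_mul_of_nonneg_left haH (le_of_lt (mul_pos hTpos hRpos))]
  calc (T : ℝ) / (2 * H * R) ≤ (T : ℝ) / (lam * R) * (Δ a) ^ 2 := key
    _ ≤ n r * (Δ a) ^ 2 := mul_le_mul_of_nonneg_right (hn r hr1 hr2) (sq_nonneg _)
end

section
/- Geometric grid allocation bound: let R ≥ 1, K ≥ 2, T ≥ 2RK, α_r := ⌊(T/R)·K^{r/R}/K^{1+1/R}⌋ for r ∈ [R], and λ_{r+1} := ⌊K/K^{r/R}⌋. Then for every r ∈ [R], α_r·(λ_{r+1}+1) ≥ T/(2R·K^{1/R}). Consequently, for sorted positive gaps Δ_(1) ≤ … ≤ Δ_(K), min_{r∈[R]} α_r·Δ_(λ_{r+1}+1)² ≥ T/(2R·K^{1/R}·H_2) with H_2 := max_{i∈[K]} i·Δ_(i)^{-2}. -/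
noncomputable section

/-- Geometric grid allocation `α_r := ⌊(T/R)·K^{r/R}/K^{1+1/R}⌋`. -/
def alphaGG (T R K r : ℕ) : ℕ :=
  ⌊((T : ℝ) / R) * (K : ℝ) ^ ((r : ℝ) / R) / (K : ℝ) ^ (1 + 1 / (R : ℝ))⌋₊

/-- Geometric grid schedule `λ_{r+1} := ⌊K / K^{r/R}⌋`. -/
def lamGG (R K r : ℕ) : ℕ := ⌊(K : ℝ) / (K : ℝ) ^ ((r : ℝ) / R)⌋₊

/-- Geometric grid allocation bound: `α_r (λ_{r+1} + 1) ≥ T/(2 R K^{1/R})` for all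
`r ∈ [R]`, and consequently `min_r α_r Δ_(λ_{r+1}+1)² ≥ T/(2 R K^{1/R} H₂)`. -/
theorem GG_allocation_bound (R K T : ℕ) (hR : 1 ≤ R) (hK : 2 ≤ K)
    (hT : 2 * R * K ≤ T)
    (Δ : ℕ → ℝ) (hpos : ∀ i ∈ Finset.Icc 1 K, 0 < Δ i)
    (hmono : ∀ i ∈ Finset.Icc 1 K, ∀ j ∈ Finset.Icc 1 K, i ≤ j → Δ i ≤ Δ j) :
    (∀ r ∈ Finset.Icc 1 R,
      ((alphaGG T R K r : ℝ)) * ((lamGG R K r : ℝ) + 1) ≥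
        (T : ℝ) / (2 * R * (K : ℝ) ^ (1 / (R : ℝ)))) ∧
    (∀ r ∈ Finset.Icc 1 R,
      ((alphaGG T R K r : ℝ)) * (Δ (lamGG R K r + 1)) ^ 2 ≥
        (T : ℝ) /
          (2 * R * (K : ℝ) ^ (1 / (R : ℝ)) *
            (Finset.Icc 1 K).sup' (Finset.nonempty_Icc.mpr (by omega))
              (fun i => (i : ℝ) * (Δ i) ^ (-2 : ℤ)))) := by
  have hRpos : (0:ℝ) < R := by exact_mod_cast hR
  have hK1 : (1:ℝ) < K := by exact_mod_cast lt_of_lt_of_le one_lt_two hK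
  have hT' : 2 * (R:ℝ) * K ≤ T := by exact_mod_cast hT
  set c := (K:ℝ) ^ (1/(R:ℝ)) with hc
  clear_value c
  have hR1 : (1:ℝ) ≤ R := by exact_mod_cast hR
  have hc1 : 1 < c := by
    rw [hc, Real.one_lt_rpow_iff_of_pos (by linarith)]
    left; exact ⟨hK1, by positivity⟩
  have hcK : c ≤ K := by
    rw [hc]
    nth_rewrite 2 [← Real.rpow_one (K:ℝ)]
    exact Real.rpow_le_rpow_of_exponent_le hK1.le
      (by rw [div_le_one hRpos]; linarith)
  have main : ∀ r ∈ Finset.Icc 1 R,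
      (alphaGG T R K r : ℝ) * ((lamGG R K r : ℝ) + 1) ≥ (T:ℝ) / (2*R*c)
      ∧ lamGG R K r + 1 ≤ K := by
    intro r hr
    obtain ⟨hr1, hrR⟩ := Finset.mem_Icc.mp hr
    set x := (K:ℝ) ^ ((r:ℝ)/(R:ℝ)) with hx
    clear_value x
    have hcx : c ≤ x := by
      rw [hc, hx]
      apply Real.rpow_le_rpow_of_exponent_le hK1.le
      gcongr
      exact_mod_cast hr1
    have hx1 : 1 < x := lt_of_lt_of_le hc1 hcx
    have hxK : x ≤ K := by
      rw [hx]
      nth_rewrite 2 [← Real.rpow_one (K:ℝ)]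
      exact Real.rpow_le_rpow_of_exponent_le hK1.le
        (by rw [div_le_one hRpos]; exact_mod_cast hrR)
    set y := ((T : ℝ) / R) * x / (K : ℝ) ^ (1 + 1 / (R : ℝ)) with hy
    clear_value y
    have hKc : (K:ℝ) ^ (1 + 1/(R:ℝ)) = K * c := by
      rw [hc, Real.rpow_add (by linarith : (0:ℝ) < K), Real.rpow_one]
    have hy2 : 2 ≤ y := by
      rw [hy, hKc, le_div_iff₀ (by nlinarith)]
      have hTK : 2 * (K:ℝ) * R ≤ (T:ℝ) := by nlinarith
      have h1 : (2 * K) * c * R ≤ (T:ℝ) * c := by nlinarith [hc1.le]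
      have h2 : (T:ℝ) * c ≤ (T:ℝ) * x := by
        apply mul_le_mul_of_nonneg_left hcx (by positivity)
      rw [div_mul_eq_mul_div, le_div_iff₀ hRpos]
      nlinarith
    have hα : y - 1 < (alphaGG T R K r : ℝ) := by
      have h := Nat.sub_one_lt_floor y
      simpa [alphaGG, hy, hx] using h
    have hlam2 : (K:ℝ)/x < (lamGG R K r : ℝ) + 1 := by
      have h := Nat.lt_floor_add_one ((K:ℝ)/x)
      simpa [lamGG, hx] using h
    have hlamle : (lamGG R K r : ℝ) ≤ (K:ℝ)/x := by
      rw [hx]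
      exact Nat.floor_le (by positivity)
    have hlamK : lamGG R K r + 1 ≤ K := by
      have h1 : (lamGG R K r : ℝ) < K := by
        refine lt_of_le_of_lt hlamle ?_
        rw [div_lt_iff₀ (by linarith)]
        nlinarith
      have : lamGG R K r < K := by exact_mod_cast h1
      omega
    refine ⟨?_, hlamK⟩
    have hprod : (y - 1) * ((K:ℝ)/x) ≤
        (alphaGG T R K r : ℝ) * ((lamGG R K r : ℝ) + 1) :=
      mul_le_mul hα.le hlam2.le (by positivity) (by positivity)
    have hval : (y - 1) * ((K:ℝ)/x) = (T:ℝ)/(R*c) - (K:ℝ)/x := by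
      rw [hy, hKc]
      field_simp
    have hKx : (K:ℝ)/x ≤ (T:ℝ)/(2*R*c) := by
      have h1 : (K:ℝ)/x ≤ (K:ℝ)/c :=
        div_le_div_of_nonneg_left (by linarith) (by linarith) hcx
      have h2 : (K:ℝ)/c ≤ (T:ℝ)/(2*R*c) := by
        rw [div_le_div_iff₀ (by linarith) (by positivity)]
        have h3 : 2*(R:ℝ)*K*c ≤ (T:ℝ)*c :=
          mul_le_mul_of_nonneg_right hT' (by linarith)
        linarith
      linarith
    have hhalf : (T:ℝ)/(R*c) - (T:ℝ)/(2*R*c) = (T:ℝ)/(2*R*c) := by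
      field_simp
      ring
    rw [hval] at hprod
    linarith
  constructor
  · intro r hr; exact (main r hr).1
  · intro r hr
    obtain ⟨h1, hleK⟩ := main r hr
    set l := lamGG R K r + 1 with hl
    have hlmem : l ∈ Finset.Icc 1 K := Finset.mem_Icc.mpr ⟨Nat.le_add_left 1 _, hleK⟩
    have hΔpos : 0 < Δ l := hpos l hlmem
    set H := (Finset.Icc 1 K).sup' (Finset.nonempty_Icc.mpr (by omega))
      (fun i => (i : ℝ) * (Δ i) ^ (-2 : ℤ)) with hH
    have hHl : (l:ℝ) * (Δ l) ^ (-2:ℤ) ≤ H := Finset.le_sup' (fun i : ℕ => (i : ℝ) * (Δ i) ^ (-2 : ℤ)) hlmem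
    have hlpos : (0:ℝ) < l := by positivity
    have hHpos : 0 < H := by
      refine lt_of_lt_of_le ?_ hHl
      have : (Δ l) ^ (-2:ℤ) = ((Δ l)^2)⁻¹ := by
        rw [zpow_neg, zpow_two, pow_two]
      rw [this]; positivity
    rw [ge_iff_le, div_le_iff₀ (by positivity)]
    have key : (T:ℝ)/(2*R*c) ≤ (alphaGG T R K r : ℝ) * ((l:ℝ)) := by
      have : ((l:ℕ):ℝ) = (lamGG R K r : ℝ) + 1 := by
        rw [hl]; push_cast; ring
      rw [this]; exact h1
    have hαnn : (0:ℝ) ≤ (alphaGG T R K r : ℝ) := Nat.cast_nonneg _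
    have hzpow : (Δ l) ^ (-2:ℤ) = ((Δ l)^2)⁻¹ := by
      rw [zpow_neg, zpow_two, pow_two]
    have h2 : (l:ℝ) ≤ (Δ l)^2 * H := by
      rw [hzpow] at hHl
      have := mul_le_mul_of_nonneg_left hHl (le_of_lt (show (0:ℝ) < (Δ l)^2 by positivity))
      calc (l:ℝ) = (Δ l)^2 * ((l:ℝ) * ((Δ l)^2)⁻¹) := by
            field_simp
        _ ≤ (Δ l)^2 * H := this
    have step : (alphaGG T R K r : ℝ) * (l:ℝ) ≤
        (alphaGG T R K r : ℝ) * (Δ l)^2 * H := by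
      calc (alphaGG T R K r : ℝ) * (l:ℝ)
          ≤ (alphaGG T R K r : ℝ) * ((Δ l)^2 * H) :=
            mul_le_mul_of_nonneg_left h2 hαnn
        _ = (alphaGG T R K r : ℝ) * (Δ l)^2 * H := by ring
    have key2 : (T:ℝ) ≤ (alphaGG T R K r : ℝ) * (l:ℝ) * (2*R*c) := by
      rw [div_le_iff₀ (by positivity)] at key
      linarith
    calc (T:ℝ) ≤ (alphaGG T R K r : ℝ) * (l:ℝ) * (2*R*c) := key2
      _ ≤ (alphaGG T R K r : ℝ) * (Δ l)^2 * H * (2*R*c) :=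
          mul_le_mul_of_nonneg_right step (by positivity)
      _ = (alphaGG T R K r : ℝ) * (Δ l)^2 * (2*R*c*H) := by ring
end
end
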